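/- arXiv:2310.17134 — 2 statements merged into one kernel-verified Lean document; each statement's English description precedes it below -/
import Mathlib

section
/- Wirtinger's inequality: if g : ℝ → ℝ is smooth and 2π-periodic with ∫_0^{2π} g(θ) dθ = 0, then ∫_0^{2π} g(θ)² dθ ≤ ∫_0^{2π} g'(θ)² dθ. -/
open MeasureTheory Function Set ContinuousMap Complex AddCircle
open scoped Real ENNReal

section aux

variable [hT : Fact (0 < 2 * Real.pi)]

/-- Parseval for continuous maps on `AddCircle (2π)`, in interval-integral form. -/
lemma wirtinger_parseval_aux (G : C(AddCircle (2 * Real.pi), ℂ)) :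
    ∑' n : ℤ, ‖fourierCoeff (⇑G) n‖ ^ 2
      = (1 / (2 * Real.pi)) * ∫ x in (0:ℝ)..(2 * Real.pi), ‖G x‖ ^ 2 := by
  have h1 := tsum_sq_fourierCoeff (toLp (E := ℂ) 2 haarAddCircle ℂ G)
  simp_rw [fourierCoeff_toLp] at h1
  rw [h1]
  have h2 : ∫ t, ‖(toLp (E := ℂ) 2 haarAddCircle ℂ G) t‖ ^ 2 ∂haarAddCircle
      = ∫ t, ‖G t‖ ^ 2 ∂haarAddCircle := by
    apply integral_congr_ae
    filter_upwards [ContinuousMap.coeFn_toLp (p := 2) (μ := haarAddCircle) (𝕜 := ℂ) G] with t ht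
    rw [ht]
  have h3 : ∫ t, ‖G t‖ ^ 2 ∂(volume : Measure (AddCircle (2 * Real.pi)))
      = (2 * Real.pi) * ∫ t, ‖G t‖ ^ 2 ∂haarAddCircle := by
    rw [AddCircle.volume_eq_smul_haarAddCircle, integral_smul_measure,
      ENNReal.toReal_ofReal hT.out.le, smul_eq_mul]
  have h4 := AddCircle.intervalIntegral_preimage (2 * Real.pi) 0
    (fun t : AddCircle (2 * Real.pi) => ‖G t‖ ^ 2)
  rw [zero_add] at h4
  rw [h2, h4, h3]
  field_simp

lemma wirtinger_summable_aux (G : C(AddCircle (2 * Real.pi), ℂ)) :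
    Summable (fun n : ℤ => ‖fourierCoeff (⇑G) n‖ ^ 2) := by
  have hm := lp.memℓp (fourierBasis.repr (toLp (E := ℂ) 2 haarAddCircle ℂ G))
  have h := (memℓp_gen_iff (p := 2) (by norm_num)).mp hm
  have heq : ∀ n : ℤ, fourierBasis.repr (toLp (E := ℂ) 2 haarAddCircle ℂ G) n
      = fourierCoeff (⇑G) n := by
    intro n
    rw [fourierBasis_repr, fourierCoeff_toLp]
  refine h.congr fun n => ?_
  rw [heq n, show ((2 : ℝ≥0∞)).toReal = ((2 : ℕ) : ℝ) by norm_num, Real.rpow_natCast]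

end aux

/-- Wirtinger's inequality: if `g : ℝ → ℝ` is smooth and `2π`-periodic with
`∫_0^{2π} g = 0`, then `∫_0^{2π} g² ≤ ∫_0^{2π} (g')²`. -/
theorem wirtinger_inequality (g : ℝ → ℝ) (hg : ContDiff ℝ (⊤ : ℕ∞) g)
    (hper : Function.Periodic g (2 * Real.pi))
    (hmean : (∫ θ in (0:ℝ)..(2 * Real.pi), g θ) = 0) :
    (∫ θ in (0:ℝ)..(2 * Real.pi), g θ ^ 2)
      ≤ ∫ θ in (0:ℝ)..(2 * Real.pi), (deriv g θ) ^ 2 := by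
  haveI hT : Fact (0 < 2 * Real.pi) := ⟨by positivity⟩
  have hπ : (0:ℝ) < 2 * Real.pi := hT.out
  set f : ℝ → ℂ := fun x => (g x : ℂ) with hf_def
  set f' : ℝ → ℂ := fun x => Complex.ofReal (deriv g x) with hf'_def
  have hgc : Continuous g := hg.continuous
  have hg'c : Continuous (deriv g) := hg.continuous_deriv (by simp)
  have hfc : Continuous f := Complex.continuous_ofReal.comp hgc
  have hf'c : Continuous f' := Complex.continuous_ofReal.comp hg'c
  have hper' : Function.Periodic (deriv g) (2 * Real.pi) := by
    intro x
    have : deriv (fun y => g (y + 2 * Real.pi)) x = deriv g (x + 2 * Real.pi) :=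
      deriv_comp_add_const g (2 * Real.pi) x
    rw [← this]
    congr 1
    funext y
    exact hper y
  have hfp : Function.Periodic f (2 * Real.pi) := fun x => by simp [hf_def, hper x]
  have hf'p : Function.Periodic f' (2 * Real.pi) := fun x => by simp [hf'_def, hper' x]
  set F : C(AddCircle (2 * Real.pi), ℂ) :=
    ⟨hfp.lift, continuous_coinduced_dom.mpr hfc⟩ with hF_def
  set F' : C(AddCircle (2 * Real.pi), ℂ) :=
    ⟨hf'p.lift, continuous_coinduced_dom.mpr hf'c⟩ with hF'_def
  have hF_coe : ∀ x : ℝ, F (x : AddCircle (2 * Real.pi)) = f x := fun x => hfp.lift_coe x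
  have hF'_coe : ∀ x : ℝ, F' (x : AddCircle (2 * Real.pi)) = f' x := fun x => hf'p.lift_coe x
  -- Fourier coefficients of F and F' as fourierCoeffOn
  have hbr : ∀ (G : C(AddCircle (2 * Real.pi), ℂ)) (h : ℝ → ℂ)
      (_ : ∀ x : ℝ, G (x : AddCircle (2 * Real.pi)) = h x) (n : ℤ),
      fourierCoeff (⇑G) n = fourierCoeffOn hπ h n := by
    intro G h hGh n
    rw [fourierCoeff_eq_intervalIntegral (⇑G) n 0, fourierCoeffOn_eq_integral]
    rw [zero_add]
    have hs : (1/(2*Real.pi - 0)) = (1/(2*Real.pi)) := by norm_num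
    rw [hs]
    congr 1
    apply intervalIntegral.integral_congr
    intro x _
    simp only [hGh]
    rw [fourier_coe_apply, fourier_coe_apply]
    norm_num
  -- derivative relation between Fourier coefficients
  have hd : ∀ x ∈ Set.uIcc (0:ℝ) (2 * Real.pi), HasDerivAt f (f' x) x := by
    intro x _
    exact ((hg.differentiable (by simp) x).hasDerivAt).ofReal_comp
  have hint : IntervalIntegrable f' volume 0 (2 * Real.pi) :=
    hf'c.intervalIntegrable _ _
  have hrel : ∀ n : ℤ, n ≠ 0 →
      fourierCoeffOn hπ f' n = (Complex.I * n) * fourierCoeffOn hπ f n := by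
    intro n hn
    have key := fourierCoeffOn_of_hasDerivAt hπ hn hd hint
    have hfT : f (2 * Real.pi) - f 0 = 0 := by
      have := hfp 0
      rw [zero_add] at this
      rw [this, sub_self]
    rw [hfT, mul_zero, zero_sub] at key
    have hπ0 : ((Real.pi : ℂ)) ≠ 0 := Complex.ofReal_ne_zero.mpr Real.pi_ne_zero
    have hn0 : ((n : ℂ)) ≠ 0 := Int.cast_ne_zero.mpr hn
    rw [key]
    push_cast
    have hI : Complex.I ≠ 0 := Complex.I_ne_zero
    field_simp
    ring
  -- coefficient 0 of F vanishes
  have hc0 : fourierCoeff (⇑F) 0 = 0 := by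
    rw [fourierCoeff_eq_intervalIntegral (⇑F) 0 0]
    simp only [neg_zero, fourier_zero, one_smul, zero_add]
    have : (∫ x in (0:ℝ)..(2 * Real.pi), F (x : AddCircle (2 * Real.pi)))
        = ∫ x in (0:ℝ)..(2 * Real.pi), f x := by
      apply intervalIntegral.integral_congr
      intro x _
      simp only [hF_coe]
    rw [this]
    have h5 : (∫ x in (0:ℝ)..(2 * Real.pi), f x)
        = ((∫ x in (0:ℝ)..(2 * Real.pi), g x : ℝ) : ℂ) :=
      RCLike.intervalIntegral_ofReal (𝕜 := ℂ)
    rw [h5, hmean]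
    simp
  -- termwise comparison
  have hterm : ∀ n : ℤ, ‖fourierCoeff (⇑F) n‖ ^ 2 ≤ ‖fourierCoeff (⇑F') n‖ ^ 2 := by
    intro n
    rcases eq_or_ne n 0 with rfl | hn
    · rw [hc0]
      simpa using sq_nonneg ‖fourierCoeff (⇑F') 0‖
    · rw [hbr F f hF_coe n, hbr F' f' hF'_coe n, hrel n hn]
      rw [norm_mul, norm_mul, Complex.norm_I, one_mul]
      have h1 : (1:ℝ) ≤ ‖(n:ℂ)‖ := by
        rw [Complex.norm_intCast]
        exact_mod_cast Int.one_le_abs hn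
      have h2 : ‖fourierCoeffOn hπ f n‖ ≤ ‖(n:ℂ)‖ * ‖fourierCoeffOn hπ f n‖ := by
        nlinarith [norm_nonneg (fourierCoeffOn hπ f n)]
      have := pow_le_pow_left₀ (norm_nonneg _) h2 2
      simpa using this
  -- Parseval on both sides
  have hPF := wirtinger_parseval_aux F
  have hPF' := wirtinger_parseval_aux F'
  have hsum := Summable.tsum_le_tsum hterm (wirtinger_summable_aux F) (wirtinger_summable_aux F')
  rw [hPF, hPF'] at hsum
  have hFsq : (∫ x in (0:ℝ)..(2 * Real.pi), ‖F (x : AddCircle (2 * Real.pi))‖ ^ 2)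
      = ∫ θ in (0:ℝ)..(2 * Real.pi), g θ ^ 2 := by
    apply intervalIntegral.integral_congr
    intro x _
    simp only [hF_coe, hf_def]
    simp [Complex.norm_real, _root_.sq_abs]
  have hF'sq : (∫ x in (0:ℝ)..(2 * Real.pi), ‖F' (x : AddCircle (2 * Real.pi))‖ ^ 2)
      = ∫ θ in (0:ℝ)..(2 * Real.pi), (deriv g θ) ^ 2 := by
    apply intervalIntegral.integral_congr
    intro x _
    simp only [hF'_coe, hf'_def]
    simp [Complex.norm_real, _root_.sq_abs]
  rw [hFsq, hF'sq] at hsum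
  have h1π : (0:ℝ) < 1 / (2 * Real.pi) := by positivity
  exact le_of_mul_le_mul_left (by linarith [hsum]) h1π
end

section
/- L⁴ interpolation (Ladyzhenskaya inequality) in 2D: there is an absolute constant C such that for all f in the Schwartz class on ℝ², ‖f‖_{L⁴(ℝ²)} ≤ C ‖f‖_{L²(ℝ²)}^{1/2} ‖∇f‖_{L²(ℝ²)}^{1/2}. -/
/-!
Along every horizontal and every vertical line, `f²` is the integral of its derivative
`2 f ∂f`, so `f(x, y)² ≤ ∫ 2 |f| ‖Df‖` over either line through `(x, y)`. Multiplying the two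
bounds, `f(x, y)⁴` is dominated by a product of a function of `x` and a function of `y`, and
Fubini gives `∫ f⁴ ≤ (∫ 2 |f| ‖Df‖)²`. Cauchy–Schwarz then yields
`‖f‖₄⁴ ≤ 4 ‖f‖₂² ‖Df‖₂²`, i.e. the inequality with `C = 4 ^ (1/4)`.
-/

open MeasureTheory Filter Topology Set

theorem le_integral_of_hasDerivAt_of_tendsto_atBot {φ φ' h : ℝ → ℝ}
    (hφ : ∀ t, HasDerivAt φ (φ' t) t) (hlim : Tendsto φ atBot (𝓝 0))
    (hbound : ∀ t, |φ' t| ≤ h t) (hh : Integrable h) (x : ℝ) :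
    φ x ≤ ∫ t, h t := by
  have hφ'_meas : Measurable φ' := funext (fun t => (hφ t).deriv) ▸ measurable_deriv φ
  have hφ'_int : Integrable φ' :=
    hh.mono' hφ'_meas.aestronglyMeasurable (Eventually.of_forall hbound)
  have hftc : ∫ t in Iic x, φ' t = φ x := by
    rw [integral_Iic_of_hasDerivAt_of_tendsto' (fun t _ => hφ t) hφ'_int.integrableOn hlim,
      sub_zero]
  calc φ x = ∫ t in Iic x, φ' t := hftc.symm
    _ ≤ ∫ t in Iic x, h t :=
      setIntegral_mono hφ'_int.integrableOn hh.integrableOn fun t =>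
        (le_abs_self _).trans (hbound t)
    _ ≤ ∫ t, h t :=
      setIntegral_le_integral hh (Eventually.of_forall fun t => (abs_nonneg _).trans (hbound t))

theorem sq_le_integral_along_line {E : Type*} [NormedAddCommGroup E] [NormedSpace ℝ E]
    {f : E → ℝ} (hf : Differentiable ℝ f) {γ : ℝ → E} {v : E} (hγ : ∀ t, HasDerivAt γ v t)
    (hv : ‖v‖ ≤ 1) (hlim : Tendsto (f ∘ γ) atBot (𝓝 0))
    (hint : Integrable fun t => 2 * |f (γ t)| * ‖fderiv ℝ f (γ t)‖) (x : ℝ) :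
    f (γ x) ^ 2 ≤ ∫ t, 2 * |f (γ t)| * ‖fderiv ℝ f (γ t)‖ := by
  refine le_integral_of_hasDerivAt_of_tendsto_atBot (φ := fun t => f (γ t) ^ 2)
    (φ' := fun t => 2 * f (γ t) * fderiv ℝ f (γ t) v) (fun t => ?_) (by simpa using hlim.pow 2)
    (fun t => ?_) hint x
  · simpa using ((hf (γ t)).hasFDerivAt.comp_hasDerivAt t (hγ t)).fun_pow 2
  · have hderiv : |fderiv ℝ f (γ t) v| ≤ ‖fderiv ℝ f (γ t)‖ := by
      simpa using (fderiv ℝ f (γ t)).le_opNorm_of_le hv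
    rw [abs_mul, abs_mul, abs_two]
    gcongr

theorem tendsto_prodMk_const_cocompact {X Y : Type*} [TopologicalSpace X] [TopologicalSpace Y]
    {l : Filter X} (hl : l ≤ cocompact X) (y : Y) :
    Tendsto (fun x => (x, y)) l (cocompact (X × Y)) := by
  rw [← coprod_cocompact]
  have hfst : Tendsto (Prod.fst ∘ fun x => (x, y)) l (cocompact X) := tendsto_id'.2 hl
  exact (tendsto_comap_iff.2 hfst).mono_right le_sup_left

theorem tendsto_const_prodMk_cocompact {X Y : Type*} [TopologicalSpace X] [TopologicalSpace Y]
    {l : Filter Y} (hl : l ≤ cocompact Y) (x : X) :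
    Tendsto (fun y => (x, y)) l (cocompact (X × Y)) := by
  rw [← coprod_cocompact]
  have hsnd : Tendsto (Prod.snd ∘ fun y => (x, y)) l (cocompact Y) := tendsto_id'.2 hl
  exact (tendsto_comap_iff.2 hsnd).mono_right le_sup_right

theorem integral_sq_le_sq_integral_of_le_line_integrals {u H : ℝ × ℝ → ℝ} (hu : 0 ≤ u)
    (hH : Integrable H) (h₁ : ∀ᵐ y, ∀ x, u (x, y) ≤ ∫ t, H (t, y))
    (h₂ : ∀ᵐ x, ∀ y, u (x, y) ≤ ∫ t, H (x, t)) :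
    ∫ z, u z ^ 2 ≤ (∫ z, H z) ^ 2 := by
  rw [Measure.volume_eq_prod] at hH ⊢
  have hpointwise : ∀ᵐ z ∂(volume.prod volume),
      u z ^ 2 ≤ (∫ t, H (z.1, t)) * ∫ t, H (t, z.2) := by
    filter_upwards [Measure.quasiMeasurePreserving_fst.ae h₂,
      Measure.quasiMeasurePreserving_snd.ae h₁] with z hz₂ hz₁
    rw [sq]
    exact mul_le_mul (hz₂ z.2) (hz₁ z.1) (hu z) ((hu z).trans (hz₂ z.2))
  have hrows : ∫ x, ∫ t, H (x, t) = ∫ z, H z ∂(volume.prod volume) :=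
    integral_integral (f := fun x t => H (x, t)) hH
  have hcols : ∫ y, ∫ t, H (t, y) = ∫ z, H z ∂(volume.prod volume) :=
    (integral_integral_swap (f := fun x t => H (x, t)) hH).symm.trans hrows
  calc ∫ z, u z ^ 2 ∂(volume.prod volume)
      ≤ ∫ z, ((∫ t, H (z.1, t)) * ∫ t, H (t, z.2)) ∂(volume.prod volume) :=
        integral_mono_of_nonneg (Eventually.of_forall fun z => sq_nonneg _)
          (hH.integral_prod_left.mul_prod hH.integral_prod_right) hpointwise
    _ = (∫ x, ∫ t, H (x, t)) * ∫ y, ∫ t, H (t, y) :=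
        integral_prod_mul (fun x => ∫ t, H (x, t)) (fun y => ∫ t, H (t, y))
    _ = (∫ z, H z ∂(volume.prod volume)) ^ 2 := by rw [hrows, hcols, sq]

theorem sq_integral_mul_le_of_nonneg {α : Type*} [MeasurableSpace α] {μ : Measure α}
    {a b : α → ℝ} (ha0 : 0 ≤ a) (hb0 : 0 ≤ b) (ha : MemLp a 2 μ) (hb : MemLp b 2 μ) :
    (∫ x, a x * b x ∂μ) ^ 2 ≤ (∫ x, a x ^ 2 ∂μ) * ∫ x, b x ^ 2 ∂μ := by
  have hholder := integral_mul_le_Lp_mul_Lq_of_nonneg Real.HolderConjugate.two_two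
    (Eventually.of_forall ha0) (Eventually.of_forall hb0) (by simpa using ha) (by simpa using hb)
  simp only [Real.rpow_two, ← Real.sqrt_eq_rpow] at hholder
  calc (∫ x, a x * b x ∂μ) ^ 2
      ≤ (√(∫ x, a x ^ 2 ∂μ) * √(∫ x, b x ^ 2 ∂μ)) ^ 2 :=
        pow_le_pow_left₀ (integral_nonneg fun x => mul_nonneg (ha0 x) (hb0 x)) hholder 2
    _ = (∫ x, a x ^ 2 ∂μ) * ∫ x, b x ^ 2 ∂μ := by
        rw [mul_pow, Real.sq_sqrt (integral_nonneg fun x => sq_nonneg _),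
          Real.sq_sqrt (integral_nonneg fun x => sq_nonneg _)]

theorem SchwartzMap.integral_abs_pow_four_le (f : SchwartzMap (ℝ × ℝ) ℝ) :
    ∫ z, |f z| ^ 4 ≤ 4 * ((∫ z, f z ^ 2) * ∫ z, ‖fderiv ℝ f z‖ ^ 2) := by
  set H : ℝ × ℝ → ℝ := fun z => 2 * |f z| * ‖fderiv ℝ f z‖ with hH_def
  have hf : MemLp (fun z => |f z|) 2 := by simpa using (f.memLp 2).norm
  have hDf : MemLp (fun z => ‖fderiv ℝ f z‖) 2 := by
    simpa using ((SchwartzMap.fderivCLM ℝ (ℝ × ℝ) ℝ f).memLp 2).norm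
  have hH : Integrable H := by simpa [hH_def, mul_assoc] using (hf.integrable_mul hDf).const_mul 2
  have hH_prod : Integrable H (volume.prod volume) := Measure.volume_eq_prod ℝ ℝ ▸ hH
  have h₁ : ∀ᵐ y, ∀ x, f (x, y) ^ 2 ≤ ∫ t, H (t, y) := by
    filter_upwards [hH_prod.prod_left_ae] with y hy x
    exact sq_le_integral_along_line f.differentiable (v := (1, 0))
      (fun t => (hasDerivAt_id t).prodMk (hasDerivAt_const t y)) (by simp)
      (f.tendsto_cocompact.comp (tendsto_prodMk_const_cocompact atBot_le_cocompact y)) hy x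
  have h₂ : ∀ᵐ x, ∀ y, f (x, y) ^ 2 ≤ ∫ t, H (x, t) := by
    filter_upwards [hH_prod.prod_right_ae] with x hx y
    exact sq_le_integral_along_line f.differentiable (v := (0, 1))
      (fun t => (hasDerivAt_const t x).prodMk (hasDerivAt_id t)) (by simp)
      (f.tendsto_cocompact.comp (tendsto_const_prodMk_cocompact atBot_le_cocompact x)) hx y
  calc ∫ z, |f z| ^ 4 = ∫ z, (f z ^ 2) ^ 2 := by simp_rw [← sq_abs (f _), ← pow_mul]
    _ ≤ (∫ z, H z) ^ 2 :=
      integral_sq_le_sq_integral_of_le_line_integrals (fun z => sq_nonneg _) hH h₁ h₂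
    _ = 4 * (∫ z, |f z| * ‖fderiv ℝ f z‖) ^ 2 := by
      simp_rw [hH_def, mul_assoc, integral_const_mul]
      ring
    _ ≤ 4 * ((∫ z, f z ^ 2) * ∫ z, ‖fderiv ℝ f z‖ ^ 2) := by
      simp_rw [← sq_abs (f _)]
      gcongr
      exact sq_integral_mul_le_of_nonneg (fun z => abs_nonneg _) (fun z => norm_nonneg _) hf hDf

/-- Ladyzhenskaya's inequality in 2D: there is an absolute constant `C` such that for
Schwartz `f` on `ℝ²`, `‖f‖_{L⁴} ≤ C ‖f‖_{L²}^{1/2} ‖∇f‖_{L²}^{1/2}`. -/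
theorem ladyzhenskaya_2d :
    ∃ C > (0:ℝ), ∀ f : SchwartzMap (ℝ × ℝ) ℝ,
      (∫ x : ℝ × ℝ, |f x| ^ 4) ^ ((1:ℝ)/4)
        ≤ C * (∫ x : ℝ × ℝ, f x ^ 2) ^ ((1:ℝ)/4)
            * (∫ x : ℝ × ℝ, ‖fderiv ℝ (⇑f) x‖ ^ 2) ^ ((1:ℝ)/4) := by
  refine ⟨4 ^ ((1:ℝ)/4), by positivity, fun f => ?_⟩
  have hA : 0 ≤ ∫ x : ℝ × ℝ, f x ^ 2 := integral_nonneg fun x => sq_nonneg _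
  have hB : 0 ≤ ∫ x : ℝ × ℝ, ‖fderiv ℝ (⇑f) x‖ ^ 2 := integral_nonneg fun x => sq_nonneg _
  calc (∫ x : ℝ × ℝ, |f x| ^ 4) ^ ((1:ℝ)/4)
      ≤ (4 * ((∫ x : ℝ × ℝ, f x ^ 2) * ∫ x : ℝ × ℝ, ‖fderiv ℝ (⇑f) x‖ ^ 2)) ^ ((1:ℝ)/4) :=
        Real.rpow_le_rpow (integral_nonneg fun x => by positivity) f.integral_abs_pow_four_le
          (by norm_num)
    _ = _ := by rw [Real.mul_rpow (by norm_num) (by positivity), Real.mul_rpow hA hB, mul_assoc]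
end
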